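/- For the local Toffoli gate set on two bitstrings, the relative coordinate evolves autonomously: if S = {z, z'} is a pair of distinct bitstrings and u = u_{iab} is a gate from the local set, then the relative coordinate r = z ⊕ z' of u(S) depends only on r (and the randomly chosen gate), specifically: if r_{i−1} = r_{i+1} = 0 then r is unchanged, and otherwise exactly 2 of the 4 choices of (a,b) flip bit r_i while the other 2 leave r unchanged. -/
import Mathlib


open Finset

/-- The local gate `u_{iab}` on `N`-bit strings (bits in `𝔽₂ = ZMod 2`): it
flips bit `i` of `w` iff `w_{i−1} = a` and `w_{i+1} = b` (indices mod `N`). -/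
def localGate {N : ℕ} [NeZero N] (i : Fin N) (a b : ZMod 2) :
    (Fin N → ZMod 2) → (Fin N → ZMod 2) :=
  fun w => if w (i - 1) = a ∧ w (i + 1) = b then Function.update w i (w i + 1) else w

lemma zmod2_add_eq_zero_iff : ∀ x y : ZMod 2, x + y = 0 ↔ x = y := by decide

lemma zmod2_ne_add_one : ∀ x : ZMod 2, x ≠ x + 1 := by decide

lemma localGate_sum {N : ℕ} [NeZero N] (i : Fin N) (a b : ZMod 2)
    (z z' : Fin N → ZMod 2) :
    localGate i a b z + localGate i a b z' =
      if ((z (i - 1) = a ∧ z (i + 1) = b) ↔ (z' (i - 1) = a ∧ z' (i + 1) = b)) then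
        z + z'
      else Function.update (z + z') i ((z + z') i + 1) := by
  unfold localGate
  by_cases h1 : z (i - 1) = a ∧ z (i + 1) = b <;>
    by_cases h2 : z' (i - 1) = a ∧ z' (i + 1) = b
  · rw [if_pos h1, if_pos h2, if_pos (by tauto)]
    funext j
    by_cases hj : j = i <;> simp [Function.update, hj] <;>
      ring_nf <;> simp [show (2:ZMod 2)=0 from rfl]
  · rw [if_pos h1, if_neg h2, if_neg (by tauto)]
    funext j
    by_cases hj : j = i <;> simp [Function.update, hj] <;> ring
  · rw [if_neg h1, if_pos h2, if_neg (by tauto)]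
    funext j
    by_cases hj : j = i <;> simp [Function.update, hj] <;> ring
  · rw [if_neg h1, if_neg h2, if_pos (by tauto)]

lemma key_card : ∀ α β α' β' : ZMod 2, ¬(α = α' ∧ β = β') →
    ((univ.filter (fun p : ZMod 2 × ZMod 2 =>
        ¬((α = p.1 ∧ β = p.2) ↔ (α' = p.1 ∧ β' = p.2)))).card = 2 ∧
     (univ.filter (fun p : ZMod 2 × ZMod 2 =>
        ((α = p.1 ∧ β = p.2) ↔ (α' = p.1 ∧ β' = p.2)))).card = 2) := by decide

/-- For the local Toffoli gate set acting on a pair of distinct bitstrings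
`S = {z, z'}`, the relative coordinate `r = z ⊕ z'` evolves autonomously:
if `r_{i−1} = r_{i+1} = 0` then `r` is unchanged for every choice of controls
`(a,b)`; otherwise exactly 2 of the 4 choices of `(a,b)` flip bit `r_i`
(giving relative coordinate `update r i (r i + 1)`), while the other 2 leave `r`
unchanged. -/
theorem relative_coordinate_evolution (N : ℕ) [NeZero N] (hN : 3 ≤ N)
    (z z' : Fin N → ZMod 2) (hzz : z ≠ z') (i : Fin N) :
    ((z + z') (i - 1) = 0 ∧ (z + z') (i + 1) = 0 →
      ∀ a b : ZMod 2, localGate i a b z + localGate i a b z' = z + z') ∧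
    (¬ ((z + z') (i - 1) = 0 ∧ (z + z') (i + 1) = 0) →
      (Finset.univ.filter (fun p : ZMod 2 × ZMod 2 =>
          localGate i p.1 p.2 z + localGate i p.1 p.2 z'
            = Function.update (z + z') i ((z + z') i + 1))).card = 2 ∧
      (Finset.univ.filter (fun p : ZMod 2 × ZMod 2 =>
          localGate i p.1 p.2 z + localGate i p.1 p.2 z' = z + z')).card = 2) := by
  have hru : z + z' ≠ Function.update (z + z') i ((z + z') i + 1) := by
    intro h
    have := congrFun h i
    rw [Function.update_self] at this
    exact zmod2_ne_add_one _ this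
  constructor
  · rintro ⟨h1, h2⟩ a b
    have e1 : z (i - 1) = z' (i - 1) := (zmod2_add_eq_zero_iff _ _).mp h1
    have e2 : z (i + 1) = z' (i + 1) := (zmod2_add_eq_zero_iff _ _).mp h2
    rw [localGate_sum, if_pos (by rw [e1, e2])]
  · intro h
    have hne : ¬(z (i - 1) = z' (i - 1) ∧ z (i + 1) = z' (i + 1)) := by
      rintro ⟨e1, e2⟩
      exact h ⟨(zmod2_add_eq_zero_iff _ _).mpr e1, (zmod2_add_eq_zero_iff _ _).mpr e2⟩
    obtain ⟨c1, c2⟩ := key_card (z (i - 1)) (z (i + 1)) (z' (i - 1)) (z' (i + 1)) hne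
    constructor
    · have heq : (Finset.univ.filter (fun p : ZMod 2 × ZMod 2 =>
          localGate i p.1 p.2 z + localGate i p.1 p.2 z'
            = Function.update (z + z') i ((z + z') i + 1)))
        = (univ.filter (fun p : ZMod 2 × ZMod 2 =>
          ¬((z (i - 1) = p.1 ∧ z (i + 1) = p.2) ↔ (z' (i - 1) = p.1 ∧ z' (i + 1) = p.2)))) := by
        apply Finset.filter_congr
        intro p _
        rw [localGate_sum]
        by_cases hiff : (z (i - 1) = p.1 ∧ z (i + 1) = p.2) ↔
            (z' (i - 1) = p.1 ∧ z' (i + 1) = p.2)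
        · simp [hiff, hru]
        · simp [hiff]
      rw [heq, c1]
    · have heq : (Finset.univ.filter (fun p : ZMod 2 × ZMod 2 =>
          localGate i p.1 p.2 z + localGate i p.1 p.2 z' = z + z'))
        = (univ.filter (fun p : ZMod 2 × ZMod 2 =>
          ((z (i - 1) = p.1 ∧ z (i + 1) = p.2) ↔ (z' (i - 1) = p.1 ∧ z' (i + 1) = p.2)))) := by
        apply Finset.filter_congr
        intro p _
        rw [localGate_sum]
        by_cases hiff : (z (i - 1) = p.1 ∧ z (i + 1) = p.2) ↔
            (z' (i - 1) = p.1 ∧ z' (i + 1) = p.2)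
        · simp [hiff]
        · simp [hiff, Ne.symm hru]
      rw [heq, c2]
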